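/- Feasibility of the descent-direction cone program: given a finite set H of points h ≠ x, there exists a unit vector d and β < 0 with ⟨d, (h − x)/‖h − x‖⟩ ≤ β for all h ∈ H if and only if 0 does not lie in the convex hull of the normalized vectors { (h − x)/‖h − x‖ : h ∈ H }. -/

import Mathlib

/-!
Gordan-type alternative via the nearest point: if `0` is not in the (compact, convex) hull `C`
of the normalized directions, the point `p ∈ C` closest to `0` satisfies `⟪p, c⟫ ≥ ‖p‖²` for all
`c ∈ C`, so `d = -p / ‖p‖` and `β = -‖p‖` solve the cone program. Conversely a solution puts the
whole hull in the half-space `⟪d, ·⟫ ≤ β`, which misses `0`.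
-/

open RealInnerProductSpace

variable {E : Type*} [NormedAddCommGroup E] [InnerProductSpace ℝ E]

theorem zero_notMem_convexHull_of_inner_le {S : Set E} (d : E) {β : ℝ} (hβ : β < 0)
    (hS : ∀ s ∈ S, ⟪d, s⟫ ≤ β) : (0 : E) ∉ convexHull ℝ S := fun h0 => by
  have hhalf : convexHull ℝ S ⊆ {y | ⟪d, y⟫ ≤ β} :=
    convexHull_min hS (convex_halfSpace_le (innerₛₗ ℝ d).isLinear β)
  have : ⟪d, (0 : E)⟫ ≤ β := hhalf h0
  rw [inner_zero_right] at this
  linarith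

theorem exists_unit_inner_le_neg_of_zero_notMem {C : Set E} (hne : C.Nonempty)
    (hcomplete : IsComplete C) (hconv : Convex ℝ C) (h0 : (0 : E) ∉ C) :
    ∃ (d : E) (β : ℝ), ‖d‖ = 1 ∧ β < 0 ∧ ∀ c ∈ C, ⟪d, c⟫ ≤ β := by
  obtain ⟨p, hpC, hp⟩ := exists_norm_eq_iInf_of_complete_convex hne hcomplete hconv 0
  have hobtuse := (norm_eq_iInf_iff_real_inner_le_zero hconv hpC).1 hp
  have hnp : 0 < ‖p‖ := norm_pos_iff.2 (ne_of_mem_of_not_mem hpC h0)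
  refine ⟨-‖p‖⁻¹ • p, -‖p‖, ?_, neg_neg_of_pos hnp, fun c hc => ?_⟩
  · rw [norm_smul, norm_neg, norm_inv, norm_norm, inv_mul_cancel₀ hnp.ne']
  have hpc : ‖p‖ ^ 2 ≤ ⟪p, c⟫ := by
    have := hobtuse c hc
    rw [zero_sub, inner_neg_left, inner_sub_right, real_inner_self_eq_norm_sq] at this
    linarith
  calc ⟪-‖p‖⁻¹ • p, c⟫ = -(⟪p, c⟫ / ‖p‖) := by rw [real_inner_smul_left]; ring
    _ ≤ -(‖p‖ ^ 2 / ‖p‖) := by gcongr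
    _ = -‖p‖ := by rw [sq, mul_div_cancel_right₀ _ hnp.ne']

theorem exists_unit_inner_le_neg_iff_zero_notMem_convexHull {S : Set E} (hfin : S.Finite)
    (hne : S.Nonempty) :
    (∃ (d : E) (β : ℝ), ‖d‖ = 1 ∧ β < 0 ∧ ∀ s ∈ S, ⟪d, s⟫ ≤ β) ↔ (0 : E) ∉ convexHull ℝ S := by
  refine ⟨fun ⟨d, β, _, hβ, hS⟩ => zero_notMem_convexHull_of_inner_le d hβ hS, fun h0 => ?_⟩
  obtain ⟨d, β, hd, hβ, hC⟩ := exists_unit_inner_le_neg_of_zero_notMem hne.convexHull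
    (hfin.isCompact_convexHull ℝ).isComplete (convex_convexHull ℝ S) h0
  exact ⟨d, β, hd, hβ, fun s hs => hC s (subset_convexHull ℝ S hs)⟩

theorem dd_soc_feasibility_gordan_general (n : ℕ) (x : EuclideanSpace ℝ (Fin n))
    (H : Finset (EuclideanSpace ℝ (Fin n))) (hne : H.Nonempty) :
    (∃ (d : EuclideanSpace ℝ (Fin n)) (β : ℝ), ‖d‖ = 1 ∧ β < 0 ∧
        ∀ h ∈ H, (inner ℝ d (‖h - x‖⁻¹ • (h - x)) : ℝ) ≤ β) ↔
      (0 : EuclideanSpace ℝ (Fin n)) ∉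
        convexHull ℝ ((fun h => ‖h - x‖⁻¹ • (h - x)) '' (H : Set (EuclideanSpace ℝ (Fin n)))) := by
  rw [← exists_unit_inner_le_neg_iff_zero_notMem_convexHull (H.finite_toSet.image _)
    (hne.to_set.image _)]
  simp only [Set.forall_mem_image, Finset.mem_coe]

theorem dd_soc_feasibility_gordan (n : ℕ) (x : EuclideanSpace ℝ (Fin n))
    (H : Finset (EuclideanSpace ℝ (Fin n))) (hne : H.Nonempty) (hx : x ∉ H) :
    (∃ (d : EuclideanSpace ℝ (Fin n)) (β : ℝ), ‖d‖ = 1 ∧ β < 0 ∧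
        ∀ h ∈ H, (inner ℝ d (‖h - x‖⁻¹ • (h - x)) : ℝ) ≤ β) ↔
      (0 : EuclideanSpace ℝ (Fin n)) ∉
        convexHull ℝ ((fun h => ‖h - x‖⁻¹ • (h - x)) '' (H : Set (EuclideanSpace ℝ (Fin n)))) :=
  dd_soc_feasibility_gordan_general n x H hne
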